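/- arXiv:2110.10245 — 2 statements merged into one kernel-verified Lean document; each statement's English description precedes it below -/
import Mathlib

section
/- Quantile monotonicity transfer: Suppose θ* ∈ ℝⁿ is nondecreasing and y_j = θ*_j + ε_j. Fix indices l_i ≤ i − 1 < i ≤ u_i. Then the event {max_{l_i ≤ l ≤ i−1} τ-quantile(y_{l:i−1}) < min_{i ≤ u ≤ u_i} τ-quantile(y_{i:u})} is contained in the event {max_{l_i ≤ l ≤ i−1} τ-quantile(ε_{l:i−1}) < min_{i ≤ u ≤ u_i} τ-quantile(ε_{i:u}) + θ*_{u_i} − θ*_{l_i}}. -/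
open Finset

/-- `q` is an empirical `τ`-quantile of the multiset `{z_j : j ∈ s}`. -/
def IsQuantile {ι : Type*} (τ : ℝ) (s : Finset ι) (z : ι → ℝ) (q : ℝ) : Prop :=
  ((s.filter fun j => z j < q).card : ℝ) ≤ τ * s.card ∧
    τ * s.card ≤ ((s.filter fun j => z j ≤ q).card : ℝ)

lemma exists_quantile_ge {ι : Type*} (τ : ℝ) (hτ0 : 0 ≤ τ) (hτ1 : τ ≤ 1)
    (s : Finset ι) (hs : s.Nonempty) (ε y : ι → ℝ) (c : ℝ)
    (h : ∀ k ∈ s, ε k + c ≤ y k) (q : ℝ) (hq : IsQuantile τ s ε q) :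
    ∃ Q, q + c ≤ Q ∧ IsQuantile τ s y Q := by
  classical
  set t : ℝ := τ * s.card with ht
  by_cases hcase : t ≤ ((s.filter fun k => y k ≤ q + c).card : ℝ)
  · refine ⟨q + c, le_refl _, ?_, hcase⟩
    calc ((s.filter fun k => y k < q + c).card : ℝ)
        ≤ ((s.filter fun k => ε k < q).card : ℝ) := by
          refine Nat.cast_le.mpr (Finset.card_le_card ?_)
          intro k hk
          simp only [Finset.mem_filter] at hk ⊢
          exact ⟨hk.1, by linarith [h k hk.1]⟩
      _ ≤ t := hq.1
  · push_neg at hcase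
    set B : Finset ι := s.filter fun k => t ≤ ((s.filter fun k' => y k' ≤ y k).card : ℝ) with hB
    have hBne : B.Nonempty := by
      obtain ⟨k1, hk1s, hk1⟩ := s.exists_max_image y hs
      refine ⟨k1, Finset.mem_filter.mpr ⟨hk1s, ?_⟩⟩
      have : s.filter (fun k' => y k' ≤ y k1) = s := by
        apply Finset.filter_true_of_mem
        intro k hk; exact hk1 k hk
      rw [this]
      calc t = τ * s.card := ht
        _ ≤ 1 * s.card := by
            apply mul_le_mul_of_nonneg_right hτ1 (Nat.cast_nonneg _)
        _ = s.card := one_mul _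
    obtain ⟨k0, hk0B, hk0min⟩ := B.exists_min_image y hBne
    have hk0s : k0 ∈ s := (Finset.mem_filter.mp hk0B).1
    have hk0t : t ≤ ((s.filter fun k' => y k' ≤ y k0).card : ℝ) :=
      (Finset.mem_filter.mp hk0B).2
    refine ⟨y k0, ?_, ?_, hk0t⟩
    · -- q + c ≤ y k0
      by_contra hlt
      push_neg at hlt
      have hsub : s.filter (fun k' => y k' ≤ y k0) ⊆ s.filter fun k => y k ≤ q + c := by
        intro k hk
        simp only [Finset.mem_filter] at hk ⊢
        exact ⟨hk.1, le_trans hk.2 hlt.le⟩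
      have := Nat.cast_le (α := ℝ) |>.mpr (Finset.card_le_card hsub)
      linarith
    · -- card (y < y k0) ≤ t
      by_contra h'
      push_neg at h'
      have ht0 : (0:ℝ) ≤ t := mul_nonneg hτ0 (Nat.cast_nonneg _)
      have hCne : (s.filter fun k => y k < y k0).Nonempty := by
        rw [← Finset.card_pos]
        by_contra hc
        push_neg at hc
        have hc0 : (s.filter fun k => y k < y k0).card = 0 := by omega
        rw [hc0] at h'
        norm_num at h'
        linarith
      obtain ⟨k2, hk2C, hk2max⟩ := (s.filter fun k => y k < y k0).exists_max_image y hCne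
      have hk2s : k2 ∈ s := (Finset.mem_filter.mp hk2C).1
      have hk2lt : y k2 < y k0 := (Finset.mem_filter.mp hk2C).2
      have hsub : (s.filter fun k => y k < y k0) ⊆ s.filter fun k' => y k' ≤ y k2 := by
        intro k hk
        simp only [Finset.mem_filter] at hk ⊢
        exact ⟨hk.1, hk2max k (Finset.mem_filter.mpr hk)⟩
      have hk2B : k2 ∈ B := by
        refine Finset.mem_filter.mpr ⟨hk2s, ?_⟩
        have := Nat.cast_le (α := ℝ) |>.mpr (Finset.card_le_card hsub)
        linarith
      have := hk0min k2 hk2B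
      linarith

lemma exists_quantile_le {ι : Type*} (τ : ℝ) (hτ0 : 0 ≤ τ) (hτ1 : τ ≤ 1)
    (s : Finset ι) (hs : s.Nonempty) (ε y : ι → ℝ) (c : ℝ)
    (h : ∀ k ∈ s, y k ≤ ε k + c) (q : ℝ) (hq : IsQuantile τ s ε q) :
    ∃ Q, Q ≤ q + c ∧ IsQuantile τ s y Q := by
  classical
  set t : ℝ := τ * s.card with ht
  by_cases hcase : ((s.filter fun k => y k < q + c).card : ℝ) ≤ t
  · refine ⟨q + c, le_refl _, hcase, ?_⟩
    calc t ≤ ((s.filter fun k => ε k ≤ q).card : ℝ) := hq.2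
      _ ≤ ((s.filter fun k => y k ≤ q + c).card : ℝ) := by
          refine Nat.cast_le.mpr (Finset.card_le_card ?_)
          intro k hk
          simp only [Finset.mem_filter] at hk ⊢
          exact ⟨hk.1, by linarith [h k hk.1]⟩
  · push_neg at hcase
    set B : Finset ι := s.filter fun k => ((s.filter fun k' => y k' < y k).card : ℝ) ≤ t with hB
    have hBne : B.Nonempty := by
      obtain ⟨k1, hk1s, hk1⟩ := s.exists_min_image y hs
      refine ⟨k1, Finset.mem_filter.mpr ⟨hk1s, ?_⟩⟩
      have : s.filter (fun k' => y k' < y k1) = ∅ := by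
        apply Finset.filter_false_of_mem
        intro k hk; exact not_lt.mpr (hk1 k hk)
      rw [this]
      simp
      exact mul_nonneg hτ0 (Nat.cast_nonneg _)
    obtain ⟨k0, hk0B, hk0max⟩ := B.exists_max_image y hBne
    have hk0s : k0 ∈ s := (Finset.mem_filter.mp hk0B).1
    have hk0t : ((s.filter fun k' => y k' < y k0).card : ℝ) ≤ t :=
      (Finset.mem_filter.mp hk0B).2
    refine ⟨y k0, ?_, hk0t, ?_⟩
    · -- y k0 ≤ q + c
      by_contra hlt
      push_neg at hlt
      have hsub : (s.filter fun k => y k < q + c) ⊆ s.filter fun k' => y k' < y k0 := by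
        intro k hk
        simp only [Finset.mem_filter] at hk ⊢
        exact ⟨hk.1, lt_trans hk.2 hlt⟩
      have := Nat.cast_le (α := ℝ) |>.mpr (Finset.card_le_card hsub)
      linarith
    · -- t ≤ card (y ≤ y k0)
      by_contra h'
      push_neg at h'
      have hDne : (s.filter fun k => y k0 < y k).Nonempty := by
        have hne : s.filter (fun k => y k ≤ y k0) ≠ s := by
          intro heq
          have : t ≤ ((s.filter fun k => y k ≤ y k0).card : ℝ) := by
            rw [heq, ht]
            calc τ * s.card ≤ 1 * s.card :=
                mul_le_mul_of_nonneg_right hτ1 (Nat.cast_nonneg _)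
              _ = s.card := one_mul _
          linarith
        obtain ⟨k, hks, hk⟩ : ∃ k ∈ s, ¬ (y k ≤ y k0) := by
          by_contra hall
          push_neg at hall
          exact hne (Finset.filter_true_of_mem hall)
        exact ⟨k, Finset.mem_filter.mpr ⟨hks, not_le.mp hk⟩⟩
      obtain ⟨k2, hk2D, hk2min⟩ := (s.filter fun k => y k0 < y k).exists_min_image y hDne
      have hk2s : k2 ∈ s := (Finset.mem_filter.mp hk2D).1
      have hk2gt : y k0 < y k2 := (Finset.mem_filter.mp hk2D).2
      have hsub : (s.filter fun k' => y k' < y k2) ⊆ s.filter fun k => y k ≤ y k0 := by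
        intro k hk
        simp only [Finset.mem_filter] at hk ⊢
        refine ⟨hk.1, ?_⟩
        by_contra hgt
        push_neg at hgt
        have hkD : k ∈ s.filter fun k => y k0 < y k := Finset.mem_filter.mpr ⟨hk.1, hgt⟩
        exact absurd (hk2min k hkD) (not_le.mpr hk.2)
      have hk2B : k2 ∈ B := by
        refine Finset.mem_filter.mpr ⟨hk2s, ?_⟩
        have := Nat.cast_le (α := ℝ) |>.mpr (Finset.card_le_card hsub)
        linarith
      have := hk0max k2 hk2B
      linarith

/-- quantile monotonicity transfer.  With `θ*` nondecreasing and
`y = θ* + ε`, if all backward `τ`-quantiles of `y` on blocks `[l, i−1]` with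
`l ≥ l_i` are strictly less than all forward `τ`-quantiles of `y` on blocks `[i, u]`
with `u ≤ u_i`, then the same holds for `ε` up to the shift `θ*_{u_i} − θ*_{l_i}`. -/
theorem quantile_monotonicity_transfer (n : ℕ) (τ : ℝ) (hτ : τ ∈ Set.Ioo (0:ℝ) 1)
    (θstar ε y : Fin n → ℝ) (hmono : Monotone θstar) (hy : y = θstar + ε)
    (li i j ui : Fin n) (hji : (j : ℕ) + 1 = (i : ℕ)) (hli : li ≤ j) (hui : i ≤ ui)
    (hyp : ∀ l u : Fin n, li ≤ l → l ≤ j → i ≤ u → u ≤ ui →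
      ∀ q1 q2 : ℝ, IsQuantile τ (Finset.Icc l j) y q1 →
        IsQuantile τ (Finset.Icc i u) y q2 → q1 < q2) :
    ∀ l u : Fin n, li ≤ l → l ≤ j → i ≤ u → u ≤ ui →
      ∀ q1 q2 : ℝ, IsQuantile τ (Finset.Icc l j) ε q1 →
        IsQuantile τ (Finset.Icc i u) ε q2 →
          q1 < q2 + (θstar ui - θstar li) := by
  intro l u hlil hlj hiu huui q1 q2 hq1 hq2
  obtain ⟨hτ0, hτ1⟩ := hτ
  have hs1 : (Finset.Icc l j).Nonempty := ⟨l, Finset.mem_Icc.mpr ⟨le_refl _, hlj⟩⟩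
  have hs2 : (Finset.Icc i u).Nonempty := ⟨i, Finset.mem_Icc.mpr ⟨le_refl _, hiu⟩⟩
  obtain ⟨Q1, hQ1ge, hQ1⟩ := exists_quantile_ge τ hτ0.le hτ1.le (Finset.Icc l j) hs1 ε y
    (θstar li) (by
      intro k hk
      rw [hy]
      simp only [Pi.add_apply]
      have : θstar li ≤ θstar k :=
        hmono (le_trans hlil (Finset.mem_Icc.mp hk).1)
      linarith) q1 hq1
  obtain ⟨Q2, hQ2le, hQ2⟩ := exists_quantile_le τ hτ0.le hτ1.le (Finset.Icc i u) hs2 ε y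
    (θstar ui) (by
      intro k hk
      rw [hy]
      simp only [Pi.add_apply]
      have : θstar k ≤ θstar ui :=
        hmono (le_trans (Finset.mem_Icc.mp hk).2 huui)
      linarith) q2 hq2
  have := hyp l u hlil hlj hiu huui Q1 Q2 hQ1 hQ2
  linarith
end

section
/- Exponential penalty for sub-quantile level crossings: Let X_1,…,X_m be i.i.d. with CDF F satisfying F(0) = τ and F(0) − F(−ε) ≥ c ε for all ε ∈ (0, ε_0]. Then there exist ε > 0 and constants C, C' > 0 such that P( max_{1 ≤ i ≤ m} τ-quantile(X_{1:i}) ≤ −ε ) ≤ (C'/√m) exp(−C m ε²). -/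
/-!
If the running maximum of the empirical `τ`-quantiles is at most `-ε`, so is the quantile of the
whole sample, hence at least `τ m` of the `m` observations lie in `(-∞, -ε]`. These are i.i.d.
Bernoulli indicators of mean `F(-ε) ≤ τ - c ε`, so Hoeffding's inequality bounds the probability by
`exp(-2 m (τ - F(-ε))²)`; half of the exponent absorbs the factor `√m`.
-/

open MeasureTheory ProbabilityTheory Finset

/-- A canonical empirical `τ`-quantile of the multiset `{z_j : j ∈ s}`: the least `t`
with `#{j : z_j ≤ t} ≥ τ |s|`. -/
noncomputable def empQuantile {ι : Type*} (τ : ℝ) (s : Finset ι) (z : ι → ℝ) : ℝ :=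
  sInf {t : ℝ | τ * s.card ≤ ((s.filter fun j => z j ≤ t).card : ℝ)}

lemma isClosed_setOf_le_card_filter_le {ι : Type*} (s : Finset ι) (z : ι → ℝ) (a : ℝ) :
    IsClosed {t : ℝ | a ≤ (#{j ∈ s | z j ≤ t} : ℝ)} := by
  have husc : UpperSemicontinuous fun t : ℝ => ∑ j ∈ s, (Set.Ici (z j)).indicator (1 : ℝ → ℝ) t :=
    upperSemicontinuous_sum fun j _ => isClosed_Ici.upperSemicontinuous_indicator zero_le_one
  simp only [Set.indicator_apply, Set.mem_Ici, Pi.one_apply, Finset.sum_boole] at husc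
  exact husc.isClosed_preimage a

lemma mul_card_le_card_filter_of_empQuantile_le {ι : Type*} {τ : ℝ} (hτ : τ ≤ 1)
    {s : Finset ι} {z : ι → ℝ} {t : ℝ} (h : empQuantile τ s z ≤ t) :
    τ * #s ≤ (#{j ∈ s | z j ≤ t} : ℝ) := by
  -- if `τ * #s ≤ 0` the defining set is all of `ℝ` and `empQuantile` is the junk value `sInf ℝ = 0`
  rcases le_or_gt (τ * #s) 0 with hle | hpos
  · exact hle.trans (Nat.cast_nonneg _)
  obtain ⟨lo, hlo⟩ := (s.image z).bddBelow
  obtain ⟨hi, hhi⟩ := (s.image z).bddAbove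
  set S := {t : ℝ | τ * #s ≤ (#{j ∈ s | z j ≤ t} : ℝ)}
  have hhiS : hi ∈ S := by
    have hall : {j ∈ s | z j ≤ hi} = s :=
      filter_true_of_mem fun j hj => hhi (by simpa using ⟨j, hj, rfl⟩)
    simp only [S, Set.mem_ofPred_eq, hall]
    nlinarith [show (0:ℝ) ≤ #s from Nat.cast_nonneg _]
  have hloS : lo ∈ lowerBounds S := by
    intro u hu
    by_contra! hul
    have hnone : {j ∈ s | z j ≤ u} = ∅ := filter_false_of_mem fun j hj hju =>
      (hul.trans_le (hlo (by simpa using ⟨j, hj, rfl⟩))).not_ge hju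
    simp only [S, Set.mem_ofPred_eq, hnone, card_empty, CharP.cast_eq_zero] at hu
    linarith
  have hmem : empQuantile τ s z ∈ S :=
    (isClosed_setOf_le_card_filter_le s z _).csInf_mem ⟨hi, hhiS⟩ ⟨lo, hloS⟩
  exact hmem.trans (by gcongr)

lemma measureReal_mul_card_le_card_filter_mem_le {Ω ι β : Type*} [MeasurableSpace Ω]
    {μ : Measure Ω} [IsProbabilityMeasure μ] [MeasurableSpace β]
    {X : ι → Ω → β} (hX : ∀ i, Measurable (X i)) (hindep : iIndepFun X μ)
    {B : Set β} [DecidablePred (· ∈ B)] (hB : MeasurableSet B) {p q : ℝ}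
    (hp : ∀ i, μ.real (X i ⁻¹' B) ≤ p) (hpq : p ≤ q) (s : Finset ι) :
    μ.real {ω | q * #s ≤ (#{i ∈ s | X i ω ∈ B} : ℝ)} ≤ Real.exp (-2 * #s * (q - p) ^ 2) := by
  set Y : ι → Ω → ℝ := fun i ω => B.indicator 1 (X i ω)
  have hY_meas : ∀ i, Measurable (Y i) := fun i => (measurable_one.indicator hB).comp (hX i)
  have hY_mean : ∀ i, μ[Y i] = μ.real (X i ⁻¹' B) := fun i => by
    simp only [Y, ← Set.indicator_comp_right, Pi.one_comp]
    exact integral_indicator_one (hX i hB)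
  have hY_sum : ∀ ω, ∑ i ∈ s, Y i ω = #{i ∈ s | X i ω ∈ B} := fun ω => by
    simp only [Y, Set.indicator_apply, Pi.one_apply, natCast_card_filter]
  have hZ_indep : iIndepFun (fun i ω => Y i ω - μ[Y i]) μ := by
    exact hindep.comp (fun i x => B.indicator (1 : β → ℝ) x - μ[Y i])
      fun i => (measurable_one.indicator hB).sub_const _
  have hZ_subG : ∀ i ∈ s,
      HasSubgaussianMGF (fun ω => Y i ω - μ[Y i]) ((‖(1:ℝ) - 0‖₊ / 2) ^ 2) μ := fun i _ =>
    hasSubgaussianMGF_of_mem_Icc (hY_meas i).aemeasurable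
      (ae_of_all _ fun ω => by by_cases h : X i ω ∈ B <;> simp [Y, h])
  have hoeffding := HasSubgaussianMGF.measure_sum_ge_le_of_iIndepFun hZ_indep hZ_subG
    (mul_nonneg (sub_nonneg.2 hpq) (Nat.cast_nonneg #s))
  have hevent : {ω | q * #s ≤ (#{i ∈ s | X i ω ∈ B} : ℝ)} ⊆
      {ω | (q - p) * #s ≤ ∑ i ∈ s, (Y i ω - μ[Y i])} := fun ω hω => by
    have : ∑ i ∈ s, μ[Y i] ≤ p * #s := by
      simpa [hY_mean, mul_comm] using sum_le_sum fun i (_ : i ∈ s) => hp i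
    simp only [Set.mem_ofPred_eq, sum_sub_distrib, hY_sum] at hω ⊢
    linarith
  calc μ.real {ω | q * #s ≤ (#{i ∈ s | X i ω ∈ B} : ℝ)}
      ≤ μ.real {ω | (q - p) * #s ≤ ∑ i ∈ s, (Y i ω - μ[Y i])} := measureReal_mono hevent
    _ ≤ Real.exp (-2 * #s * (q - p) ^ 2) := by
      refine hoeffding.trans_eq (congrArg Real.exp ?_)
      rcases (Nat.cast_nonneg (α := ℝ) #s).eq_or_lt with h | h
      · simp [← h]
      · simp only [sub_zero, nnnorm_one, one_div, inv_pow, sum_const, nsmul_eq_mul, NNReal.coe_mul,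
          NNReal.coe_natCast, NNReal.coe_inv, NNReal.coe_pow, NNReal.coe_ofNat, neg_mul]
        field_simp

lemma mul_sqrt_le_exp_sq_mul {δ x : ℝ} (hx : 0 ≤ x) : δ * √x ≤ Real.exp (δ ^ 2 * x) := by
  have hsq : (δ * √x) ^ 2 = δ ^ 2 * x := by rw [mul_pow, Real.sq_sqrt hx]
  calc δ * √x ≤ (δ * √x) ^ 2 + 1 := by nlinarith [sq_nonneg (δ * √x - 1)]
    _ ≤ Real.exp (δ ^ 2 * x) := hsq ▸ Real.add_one_le_exp _

lemma exp_neg_two_mul_sq_le {δ x : ℝ} (hδ : 0 < δ) (hx : 0 < x) :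
    Real.exp (-2 * x * δ ^ 2) ≤ 1 / δ / √x * Real.exp (-x * δ ^ 2) := by
  have hsqrt : 0 < √x := Real.sqrt_pos.2 hx
  rw [div_div, one_div_mul_eq_div, le_div_iff₀ (by positivity)]
  calc Real.exp (-2 * x * δ ^ 2) * (δ * √x)
      = Real.exp (-x * δ ^ 2) * (δ * √x * Real.exp (-x * δ ^ 2)) := by
        rw [show -2 * x * δ ^ 2 = -x * δ ^ 2 + -x * δ ^ 2 by ring, Real.exp_add]; ring
    _ ≤ Real.exp (-x * δ ^ 2) * (Real.exp (δ ^ 2 * x) * Real.exp (-x * δ ^ 2)) := by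
        gcongr; exact mul_sqrt_le_exp_sq_mul hx.le
    _ = Real.exp (-x * δ ^ 2) := by rw [← Real.exp_add]; ring_nf; rw [Real.exp_zero, mul_one]

/-- exponential penalty for sub-quantile level crossings.  For i.i.d.
`X_1, X_2, …` with CDF `F`, `F(0) = τ`, and `F(0) − F(−e) ≥ c e` for `e ∈ (0, ε₀]`,
there exist `ε > 0` and `C, C' > 0` such that for all `m ≥ 1`,
`P(max_{1 ≤ i ≤ m} τ-quantile(X_{1:i}) ≤ −ε) ≤ (C'/√m) exp(−C m ε²)`. -/
theorem subquantile_crossing_bound {Ω : Type*} [MeasurableSpace Ω]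
    (μ : Measure Ω) [IsProbabilityMeasure μ]
    (τ : ℝ) (hτ : τ ∈ Set.Ioo (0:ℝ) 1)
    (X : ℕ → Ω → ℝ) (hmeas : ∀ j, Measurable (X j))
    (hindep : iIndepFun X μ)
    (F : ℝ → ℝ) (hF : ∀ j t, (μ {ω | X j ω ≤ t}).toReal = F t) (hF0 : F 0 = τ)
    (c ε0 : ℝ) (hc : 0 < c) (hε0 : 0 < ε0)
    (hgrowth : ∀ e ∈ Set.Ioc (0:ℝ) ε0, c * e ≤ F 0 - F (-e)) :
    ∃ ε C C' : ℝ, 0 < ε ∧ 0 < C ∧ 0 < C' ∧ ∀ m : ℕ, ∀ hm : 1 ≤ m,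
      μ {ω | (Finset.Icc 1 m).sup' (Finset.nonempty_Icc.mpr hm)
          (fun i => empQuantile τ (Finset.Icc 1 i) (fun j => X j ω)) ≤ -ε} ≤
        ENNReal.ofReal (C' / Real.sqrt m * Real.exp (-C * m * ε ^ 2)) := by
  set δ := τ - F (-ε0)
  have hδ : 0 < δ := by
    have := hgrowth ε0 ⟨hε0, le_rfl⟩
    rw [hF0] at this
    linarith [mul_pos hc hε0]
  refine ⟨ε0, δ ^ 2 / ε0 ^ 2, 1 / δ, hε0, by positivity, by positivity, fun m hm => ?_⟩
  have hcrossing : {ω | (Finset.Icc 1 m).sup' (Finset.nonempty_Icc.mpr hm)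
        (fun i => empQuantile τ (Finset.Icc 1 i) (fun j => X j ω)) ≤ -ε0} ⊆
      {ω | τ * #(Icc 1 m) ≤ (#{j ∈ Icc 1 m | X j ω ∈ Set.Iic (-ε0)} : ℝ)} := fun ω hω =>
    mul_card_le_card_filter_of_empQuantile_le hτ.2.le
      ((le_sup' (fun i => empQuantile τ (Icc 1 i) (fun j => X j ω)) (right_mem_Icc.2 hm)).trans hω)
  have hoeffding := measureReal_mul_card_le_card_filter_mem_le hmeas hindep measurableSet_Iic
    (fun j => (hF j (-ε0)).le) (sub_pos.1 hδ).le (Icc 1 m)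
  rw [Nat.card_Icc, Nat.add_sub_cancel] at hcrossing hoeffding
  have hm_pos : (0 : ℝ) < m := by exact_mod_cast hm
  have hexponent : -(δ ^ 2 / ε0 ^ 2) * m * ε0 ^ 2 = -m * δ ^ 2 := by field_simp
  calc μ _ ≤ μ {ω | τ * m ≤ (#{j ∈ Icc 1 m | X j ω ∈ Set.Iic (-ε0)} : ℝ)} := measure_mono hcrossing
    _ = ENNReal.ofReal (μ.real {ω | τ * m ≤ (#{j ∈ Icc 1 m | X j ω ∈ Set.Iic (-ε0)} : ℝ)}) :=
      (ofReal_measureReal (measure_ne_top _ _)).symm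
    _ ≤ _ := ENNReal.ofReal_le_ofReal <| hoeffding.trans <| by
      simpa only [hexponent] using exp_neg_two_mul_sq_le hδ hm_pos
end
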